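/- arXiv:1906.03587 — 5 statements merged into one kernel-verified Lean document; each statement's English description precedes it below -/
import Mathlib

section
/- Let N1, N2 > 0, ρ1 ∈ (0,N1), ρ2 ∈ (0,N2), ν1 > 0, and for k1 ∈ [0,N1], k2 ∈ [0,N2] define D1(k1,k2) = (1/ν1)·( 1/(N1+N2−ρ1−ρ2) + ( (1−ρ1/(N1+N2))·(1/(N1+k2)) / (1−ρ1/(N1+k2))² − (1/(N1+N2)) / (1−ρ1/(N1+k2)) ) / ( (1−ρ1/(N1+N2))/(1−ρ1/(N1+k2)) + (1−ρ2/(N1+N2))/(1−ρ2/(N2+k1)) − 1 ) ). Then D1(k1,k2) is a strictly decreasing function of k2 on [0,N2] for each fixed k1. -/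
/-!
With `u = 1 / (1 - ρ1 / (N1 + k2))`, `a = 1 - ρ1 / (N1 + N2)` and
`c = (1 - ρ2 / (N1 + N2)) / (1 - ρ2 / (N2 + k1)) - 1`, the response time is
`D1 = (1 / ν1) * (1 / (N1 + N2 - ρ1 - ρ2) + (1 / ρ1) * (a * u ^ 2 - u) / (a * u + c))`.
Here `c ≥ 0` because `k1 ≤ N1`, and `k2 ≤ N2` means exactly `a * u ≥ 1`, the range on which
`u ↦ (a * u ^ 2 - u) / (a * u + c)` is strictly increasing. Since `u` strictly decreases in `k2`,
so does `D1`.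
-/

noncomputable def D1coc (N1 N2 ρ1 ρ2 ν1 k1 k2 : ℝ) : ℝ :=
  (1 / ν1) * (1 / (N1 + N2 - ρ1 - ρ2) +
    ((1 - ρ1 / (N1 + N2)) * (1 / (N1 + k2)) / (1 - ρ1 / (N1 + k2)) ^ 2
      - (1 / (N1 + N2)) / (1 - ρ1 / (N1 + k2)))
    / ((1 - ρ1 / (N1 + N2)) / (1 - ρ1 / (N1 + k2))
        + (1 - ρ2 / (N1 + N2)) / (1 - ρ2 / (N2 + k1)) - 1))

open Set

lemma one_sub_div_le_one_sub_div {ρ m n : ℝ} (hρ : 0 ≤ ρ) (hm : 0 < m) (hmn : m ≤ n) :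
    1 - ρ / m ≤ 1 - ρ / n :=
  sub_le_sub_left (div_le_div_of_nonneg_left hρ hm hmn) 1

lemma one_sub_div_pos {ρ x : ℝ} (hx : 0 < x) (hρx : ρ < x) : 0 < 1 - ρ / x :=
  sub_pos.mpr ((div_lt_one hx).mpr hρx)

lemma strictMonoOn_mul_sq_sub_div_mul_add {a : ℝ} (c : ℝ) (ha : 0 < a) (hc : 0 ≤ c) :
    StrictMonoOn (fun u => (a * u ^ 2 - u) / (a * u + c)) (Ici a⁻¹) := by
  intro v hv u _ huv
  have hav : 1 ≤ a * v := by simpa [inv_le_iff_one_le_mul₀' ha] using hv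
  have hv0 : 0 < v := by nlinarith
  have hu0 : 0 < u := hv0.trans huv
  rw [div_lt_div_iff₀ (by nlinarith) (by nlinarith)]
  -- the cross-multiplied difference is `(u - v) * (a ^ 2 * u * v + c * (a * (u + v) - 1))`
  nlinarith [mul_pos (sub_pos.mpr huv) (mul_pos (mul_pos (mul_pos ha ha) hv0) hu0),
    mul_nonneg hc (mul_pos (sub_pos.mpr huv) (show 0 < a * (u + v) - 1 by nlinarith)).le]

lemma one_div_one_sub_div_eq {ρ x : ℝ} (hx : x ≠ 0) (hxρ : x ≠ ρ) :
    1 / (1 - ρ / x) = 1 + ρ / (x - ρ) := by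
  have : x - ρ ≠ 0 := sub_ne_zero.mpr hxρ
  field_simp
  ring

lemma strictAntiOn_one_div_one_sub_div {ρ : ℝ} (hρ : 0 < ρ) :
    StrictAntiOn (fun x => 1 / (1 - ρ / x)) (Ioi ρ) := by
  intro x hx y hy hxy
  have hx0 : x ≠ 0 := (hρ.trans hx).ne'
  have hy0 : y ≠ 0 := (hρ.trans hy).ne'
  simp only [one_div_one_sub_div_eq hx0 hx.ne', one_div_one_sub_div_eq hy0 hy.ne']
  gcongr
  exact sub_pos.mpr hx

lemma sub_div_mul_one_div_div_sq_sub (ρ n x : ℝ) (hρ : ρ ≠ 0) (hx : x ≠ 0) (hxρ : x ≠ ρ) :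
    (1 - ρ / n) * (1 / x) / (1 - ρ / x) ^ 2 - 1 / n / (1 - ρ / x)
      = 1 / ρ * ((1 - ρ / n) * (1 / (1 - ρ / x)) ^ 2 - 1 / (1 - ρ / x)) := by
  have : x - ρ ≠ 0 := sub_ne_zero.mpr hxρ
  field_simp
  ring

lemma D1coc_eq {N1 N2 ρ1 ρ2 ν1 k1 k2 : ℝ} (hρ1 : ρ1 ≠ 0) (hk2 : N1 + k2 ≠ 0)
    (hk2ρ1 : N1 + k2 ≠ ρ1) :
    D1coc N1 N2 ρ1 ρ2 ν1 k1 k2 = 1 / ν1 * (1 / (N1 + N2 - ρ1 - ρ2) + 1 / ρ1 *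
      (((1 - ρ1 / (N1 + N2)) * (1 / (1 - ρ1 / (N1 + k2))) ^ 2 - 1 / (1 - ρ1 / (N1 + k2))) /
        ((1 - ρ1 / (N1 + N2)) * (1 / (1 - ρ1 / (N1 + k2))) +
          ((1 - ρ2 / (N1 + N2)) / (1 - ρ2 / (N2 + k1)) - 1)))) := by
  rw [D1coc, sub_div_mul_one_div_div_sq_sub _ _ _ hρ1 hk2 hk2ρ1, mul_div_assoc]
  ring_nf

theorem stmt_1_general (N1 N2 ρ1 ρ2 ν1 : ℝ)
    (hρ1 : 0 < ρ1) (hρ1' : ρ1 < N1) (hρ2 : 0 < ρ2) (hρ2' : ρ2 < N2)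
    (hν1 : 0 < ν1) :
    ∀ k1 : ℝ, 0 ≤ k1 → k1 ≤ N1 →
      StrictAntiOn (fun k2 => D1coc N1 N2 ρ1 ρ2 ν1 k1 k2) (Set.Icc 0 N2) := by
  intro k1 hk1 hk1N
  set a := 1 - ρ1 / (N1 + N2)
  set c := (1 - ρ2 / (N1 + N2)) / (1 - ρ2 / (N2 + k1)) - 1
  set u := fun k2 : ℝ => 1 / (1 - ρ1 / (N1 + k2))
  have ha : 0 < a := one_sub_div_pos (by linarith) (by linarith)
  have hc : 0 ≤ c :=
    sub_nonneg.mpr <| (one_le_div (one_sub_div_pos (by linarith) (by linarith))).mpr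
      (one_sub_div_le_one_sub_div hρ2.le (by linarith) (by linarith))
  have hu : StrictAntiOn u (Icc 0 N2) :=
    (strictAntiOn_one_div_one_sub_div hρ1).comp_strictMonoOn
      ((strictMono_id.const_add N1).strictMonoOn _) fun k hk => show ρ1 < N1 + k by linarith [hk.1]
  have hu_ge : MapsTo u (Icc 0 N2) (Ici a⁻¹) := fun k hk => by
    rw [mem_Ici, ← one_div]
    exact one_div_le_one_div_of_le (one_sub_div_pos (by linarith [hk.1]) (by linarith [hk.1]))
      (one_sub_div_le_one_sub_div hρ1.le (by linarith [hk.1]) (by linarith [hk.2]))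
  have hg := (strictMonoOn_mul_sq_sub_div_mul_add c ha hc).comp_strictAntiOn hu hu_ge
  intro x hx y hy hxy
  have hN1x : ρ1 < N1 + x := by linarith [hx.1]
  have hN1y : ρ1 < N1 + y := by linarith [hy.1]
  dsimp only
  rw [D1coc_eq hρ1.ne' (by linarith) hN1x.ne', D1coc_eq hρ1.ne' (by linarith) hN1y.ne']
  gcongr 1 / ν1 * (_ + 1 / ρ1 * ?_)
  exact hg hx hy hxy

theorem stmt_1 (N1 N2 ρ1 ρ2 ν1 : ℝ) (hN1 : 0 < N1) (hN2 : 0 < N2)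
    (hρ1 : 0 < ρ1) (hρ1' : ρ1 < N1) (hρ2 : 0 < ρ2) (hρ2' : ρ2 < N2)
    (hν1 : 0 < ν1) :
    ∀ k1 : ℝ, 0 ≤ k1 → k1 ≤ N1 →
      StrictAntiOn (fun k2 => D1coc N1 N2 ρ1 ρ2 ν1 k1 k2) (Set.Icc 0 N2) :=
  stmt_1_general N1 N2 ρ1 ρ2 ν1 hρ1 hρ1' hρ2 hρ2' hν1
end

section
/- Let N1, N2 > 0, ρ1 ∈ (0,N1), ρ2 ∈ (0,N2), ν1 > 0, and define D1(k1,k2) as the cancel-on-complete mean response time formula: D1(k1,k2) = (1/ν1)·( 1/(N1+N2−ρ1−ρ2) + ( (1−ρ1/(N1+N2))·(1/(N1+k2)) / (1−ρ1/(N1+k2))² − (1/(N1+N2)) / (1−ρ1/(N1+k2)) ) / ( (1−ρ1/(N1+N2))/(1−ρ1/(N1+k2)) + (1−ρ2/(N1+N2))/(1−ρ2/(N2+k1)) − 1 ) ). If k2 < N2, then D1(k1,k2) is a strictly increasing function of k1 on [0,N1]. -/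
/-!
The numerator of the fraction in `D1coc` does not depend on `k1` and equals
`a (b - a) / (b (a - ρ₁)²) > 0` with `a = N₁ + k₂ < b = N₁ + N₂`. Its denominator is
`C + E k₁ - 1`, where `C = (1 - ρ₁/b)/(1 - ρ₁/a) ≥ 1` and
`E t = (1 - ρ₂/b)/(1 - ρ₂/(N₂ + t))` is positive and strictly decreasing. So the denominator is
positive and strictly decreasing in `k₁`, and the fraction strictly increasing.
-/

open Set

section

variable {K : Type*} [Field K] [LinearOrder K] [IsStrictOrderedRing K]

lemma one_sub_div_pos_s2 {ρ a : K} (ha : 0 < a) (h : ρ < a) : 0 < 1 - ρ / a := by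
  rwa [sub_pos, div_lt_one ha]

lemma one_le_one_sub_div_div_one_sub_div {ρ a b : K} (hρ : 0 ≤ ρ) (hρa : ρ < a) (hab : a ≤ b) :
    1 ≤ (1 - ρ / b) / (1 - ρ / a) := by
  have ha : 0 < a := hρ.trans_lt hρa
  rw [one_le_div (one_sub_div_pos_s2 ha hρa)]
  linarith [div_le_div_of_nonneg_left hρ ha hab]

lemma one_sub_div_mul_one_div_div_sq_sub_pos {ρ a b : K} (hρa : ρ < a) (ha : 0 < a) (hab : a < b) :
    0 < (1 - ρ / b) * (1 / a) / (1 - ρ / a) ^ 2 - 1 / b / (1 - ρ / a) := by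
  have hb : 0 < b := ha.trans hab
  have haρ : a - ρ ≠ 0 := (sub_pos.mpr hρa).ne'
  have key : (1 - ρ / b) * (1 / a) / (1 - ρ / a) ^ 2 - 1 / b / (1 - ρ / a)
      = a * (b - a) / (b * (a - ρ) ^ 2) := by
    field_simp
    ring
  rw [key]
  have : 0 < b - a := sub_pos.mpr hab
  positivity

lemma strictAntiOn_div_one_sub_div {c ρ M : K} (hc : 0 < c) (hρ : 0 < ρ) (hρM : ρ < M) :
    StrictAntiOn (fun t => c / (1 - ρ / (M + t))) (Ici 0) := by
  rintro x (hx : 0 ≤ x) y - hxy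
  have hMx : 0 < M + x := by linarith
  refine div_lt_div_of_pos_left hc (one_sub_div_pos_s2 hMx (by linarith)) ?_
  linarith [div_lt_div_of_pos_left hρ hMx (by linarith : M + x < M + y)]

lemma StrictAntiOn.const_div {α : Type*} [Preorder α] {f : α → K} {s : Set α} {c : K} (hc : 0 < c)
    (hf : StrictAntiOn f s) (hpos : ∀ x ∈ s, 0 < f x) :
    StrictMonoOn (fun x => c / f x) s :=
  fun _ hx y hy hxy => div_lt_div_of_pos_left hc (hpos y hy) (hf hx hy hxy)

end

theorem stmt_2_general (N1 N2 ρ1 ρ2 ν1 : ℝ)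
    (hρ1 : 0 < ρ1) (hρ1' : ρ1 < N1) (hρ2 : 0 < ρ2) (hρ2' : ρ2 < N2)
    (hν1 : 0 < ν1) :
    ∀ k2 : ℝ, 0 ≤ k2 → k2 < N2 →
      StrictMonoOn (fun k1 => D1coc N1 N2 ρ1 ρ2 ν1 k1 k2) (Set.Icc 0 N1) := by
  intro k2 hk2 hk2'
  set A := (1 - ρ1 / (N1 + N2)) * (1 / (N1 + k2)) / (1 - ρ1 / (N1 + k2)) ^ 2
    - (1 / (N1 + N2)) / (1 - ρ1 / (N1 + k2))
  set C := (1 - ρ1 / (N1 + N2)) / (1 - ρ1 / (N1 + k2))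
  set E := fun t => (1 - ρ2 / (N1 + N2)) / (1 - ρ2 / (N2 + t))
  have hA : 0 < A := one_sub_div_mul_one_div_div_sq_sub_pos (by linarith) (by linarith)
    (by linarith : N1 + k2 < N1 + N2)
  have hC : 1 ≤ C := one_le_one_sub_div_div_one_sub_div hρ1.le (by linarith) (by linarith)
  have hE : StrictAntiOn E (Icc 0 N1) :=
    (strictAntiOn_div_one_sub_div (one_sub_div_pos_s2 (by linarith) (by linarith)) hρ2 hρ2').mono
      Icc_subset_Ici_self
  have hEpos : ∀ t ∈ Icc 0 N1, 0 < E t := fun t ht =>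
    div_pos (one_sub_div_pos_s2 (by linarith) (by linarith))
      (one_sub_div_pos_s2 (by linarith [ht.1]) (by linarith [ht.1]))
  have hfrac : StrictMonoOn (fun t => A / (C + E t - 1)) (Icc 0 N1) :=
    StrictAntiOn.const_div hA (fun x hx y hy hxy => by simpa using hE hx hy hxy)
      (fun t ht => by linarith [hEpos t ht])
  intro x hx y hy hxy
  exact mul_lt_mul_of_pos_left (add_lt_add_right (hfrac hx hy hxy) _) (by positivity)

theorem stmt_2 (N1 N2 ρ1 ρ2 ν1 : ℝ) (hN1 : 0 < N1) (hN2 : 0 < N2)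
    (hρ1 : 0 < ρ1) (hρ1' : ρ1 < N1) (hρ2 : 0 < ρ2) (hρ2' : ρ2 < N2)
    (hν1 : 0 < ν1) :
    ∀ k2 : ℝ, 0 ≤ k2 → k2 < N2 →
      StrictMonoOn (fun k1 => D1coc N1 N2 ρ1 ρ2 ν1 k1 k2) (Set.Icc 0 N1) :=
  stmt_2_general N1 N2 ρ1 ρ2 ν1 hρ1 hρ1' hρ2 hρ2' hν1
end

section
/- Let N1, N2 > 0, ρ1 ∈ (0,N1), ρ2 ∈ (0,N2), ν1, ν2 > 0, and let D1, D2 be the cancel-on-complete mean response times: D_i(k1,k2) = (1/ν_i)·( 1/(N1+N2−ρ1−ρ2) + ( (1−ρ_i/(N1+N2))·(1/(N_i+k_{−i})) / (1−ρ_i/(N_i+k_{−i}))² − (1/(N1+N2)) / (1−ρ_i/(N_i+k_{−i})) ) / ( (1−ρ1/(N1+N2))/(1−ρ1/(N1+k2)) + (1−ρ2/(N1+N2))/(1−ρ2/(N2+k1)) − 1 ) ). Then for all (k1,k2) ∈ [0,N1]×[0,N2], D1(k1,k2) ≥ D1(N1,N2) and D2(k1,k2) ≥ D2(N1,N2), with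 D1(k1,k2) > D1(N1,N2) whenever k2 < N2 and D2(k1,k2) > D2(N1,N2) whenever k1 < N1. Consequently (N1,N2) is the unique Pareto-optimal sharing configuration. -/
noncomputable def Dcoc (Ni Nmi ρi ρmi ν ki kmi : ℝ) : ℝ :=
  (1 / ν) * (1 / (Ni + Nmi - ρi - ρmi) +
    ((1 - ρi / (Ni + Nmi)) * (1 / (Ni + kmi)) / (1 - ρi / (Ni + kmi)) ^ 2
      - (1 / (Ni + Nmi)) / (1 - ρi / (Ni + kmi)))
    / ((1 - ρi / (Ni + Nmi)) / (1 - ρi / (Ni + kmi))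
        + (1 - ρmi / (Ni + Nmi)) / (1 - ρmi / (Nmi + ki)) - 1))

/-- D1(k1,k2) and D2(k1,k2) for the c.o.c. system. -/
noncomputable def D1 (N1 N2 ρ1 ρ2 ν1 k1 k2 : ℝ) : ℝ := Dcoc N1 N2 ρ1 ρ2 ν1 k1 k2
noncomputable def D2 (N1 N2 ρ1 ρ2 ν2 k1 k2 : ℝ) : ℝ := Dcoc N2 N1 ρ2 ρ1 ν2 k2 k1

/-- Pareto optimality for minimizing (D1, D2) over [0,N1]×[0,N2]. -/
def ParetoOpt (N1 N2 : ℝ) (f g : ℝ → ℝ → ℝ) (k1 k2 : ℝ) : Prop :=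
  k1 ∈ Set.Icc 0 N1 ∧ k2 ∈ Set.Icc 0 N2 ∧
  ¬ ∃ l1 l2, l1 ∈ Set.Icc 0 N1 ∧ l2 ∈ Set.Icc 0 N2 ∧
      f l1 l2 ≤ f k1 k2 ∧ g l1 l2 ≤ g k1 k2 ∧
      (f l1 l2 < f k1 k2 ∨ g l1 l2 < g k1 k2)

lemma Dcoc_key (Ni Nmi ρi ρmi ν ki kmi : ℝ) (hNi : 0 < Ni) (hNmi : 0 < Nmi)
    (hρi : 0 < ρi) (hρi' : ρi < Ni) (hρmi : 0 < ρmi) (hρmi' : ρmi < Nmi)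
    (hν : 0 < ν) (hki : 0 ≤ ki) (hki' : ki ≤ Ni) (hkmi : 0 ≤ kmi) (hkmi' : kmi ≤ Nmi) :
    Dcoc Ni Nmi ρi ρmi ν Ni Nmi ≤ Dcoc Ni Nmi ρi ρmi ν ki kmi ∧
    (kmi < Nmi → Dcoc Ni Nmi ρi ρmi ν Ni Nmi < Dcoc Ni Nmi ρi ρmi ν ki kmi) := by
  have hS : (0:ℝ) < Ni + Nmi := by linarith
  have hA : (0:ℝ) < Ni + kmi := by linarith
  have hB : (0:ℝ) < Nmi + ki := by linarith
  have hAS : Ni + kmi ≤ Ni + Nmi := by linarith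
  have hBS : Nmi + ki ≤ Ni + Nmi := by linarith
  have hx : (0:ℝ) < 1 - ρi / (Ni + kmi) := by
    have : ρi / (Ni + kmi) < 1 := (div_lt_one hA).mpr (by linarith)
    linarith
  have hy : (0:ℝ) < 1 - ρmi / (Nmi + ki) := by
    have : ρmi / (Nmi + ki) < 1 := (div_lt_one hB).mpr (by linarith)
    linarith
  have ha : (0:ℝ) < 1 - ρi / (Ni + Nmi) := by
    have : ρi / (Ni + Nmi) < 1 := (div_lt_one hS).mpr (by linarith)
    linarith
  have hb : (0:ℝ) < 1 - ρmi / (Ni + Nmi) := by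
    have : ρmi / (Ni + Nmi) < 1 := (div_lt_one hS).mpr (by linarith)
    linarith
  have hxa : 1 - ρi / (Ni + kmi) ≤ 1 - ρi / (Ni + Nmi) := by
    have := div_le_div_of_nonneg_left hρi.le hA hAS
    linarith
  have hyb : 1 - ρmi / (Nmi + ki) ≤ 1 - ρmi / (Ni + Nmi) := by
    have := div_le_div_of_nonneg_left hρmi.le hB hBS
    linarith
  have hDen : (1:ℝ) ≤ (1 - ρi / (Ni + Nmi)) / (1 - ρi / (Ni + kmi))
      + (1 - ρmi / (Ni + Nmi)) / (1 - ρmi / (Nmi + ki)) - 1 := by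
    have h1 : (1:ℝ) ≤ (1 - ρi / (Ni + Nmi)) / (1 - ρi / (Ni + kmi)) :=
      (one_le_div hx).mpr hxa
    have h2 : (1:ℝ) ≤ (1 - ρmi / (Ni + Nmi)) / (1 - ρmi / (Nmi + ki)) :=
      (one_le_div hy).mpr hyb
    linarith
  have hDen0 : (0:ℝ) < (1 - ρi / (Ni + Nmi)) / (1 - ρi / (Ni + kmi))
      + (1 - ρmi / (Ni + Nmi)) / (1 - ρmi / (Nmi + ki)) - 1 := by linarith
  have hSρ : Ni + Nmi - ρi ≠ 0 := by
    have : ρi / (Ni + Nmi) < 1 := by linarith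
    have := (div_lt_one hS).mp this
    linarith
  have hAρ' : Ni + kmi - ρi ≠ 0 := by
    have : ρi / (Ni + kmi) < 1 := by linarith
    have := (div_lt_one hA).mp this
    linarith
  -- value at (Ni, Nmi)
  have hbase : Dcoc Ni Nmi ρi ρmi ν Ni Nmi = (1/ν) * (1 / (Ni + Nmi - ρi - ρmi)) := by
    unfold Dcoc
    rw [show Nmi + Ni = Ni + Nmi from add_comm _ _, div_self ha.ne', div_self hb.ne']
    have hz : (1 - ρi / (Ni + Nmi)) * (1 / (Ni + Nmi)) / (1 - ρi / (Ni + Nmi)) ^ 2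
        - (1 / (Ni + Nmi)) / (1 - ρi / (Ni + Nmi)) = 0 := by
      field_simp
      ring
    rw [hz]
    norm_num
  -- decomposition
  have hdecomp : Dcoc Ni Nmi ρi ρmi ν ki kmi
      = (1/ν) * (1 / (Ni + Nmi - ρi - ρmi))
        + (1/ν) * (((1/(Ni+kmi) - 1/(Ni+Nmi)) / (1 - ρi / (Ni + kmi))^2)
          / ((1 - ρi / (Ni + Nmi)) / (1 - ρi / (Ni + kmi))
              + (1 - ρmi / (Ni + Nmi)) / (1 - ρmi / (Nmi + ki)) - 1)) := by
    unfold Dcoc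
    have hnum : (1 - ρi / (Ni + Nmi)) * (1 / (Ni + kmi)) / (1 - ρi / (Ni + kmi)) ^ 2
        - (1 / (Ni + Nmi)) / (1 - ρi / (Ni + kmi))
        = (1/(Ni+kmi) - 1/(Ni+Nmi)) / (1 - ρi / (Ni + kmi))^2 := by
      field_simp [hS.ne', hA.ne', hSρ, hAρ']
      ring
    rw [hnum, mul_add]
  have ht : (0:ℝ) ≤ (1/ν) * (((1/(Ni+kmi) - 1/(Ni+Nmi)) / (1 - ρi / (Ni + kmi))^2)
          / ((1 - ρi / (Ni + Nmi)) / (1 - ρi / (Ni + kmi))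
              + (1 - ρmi / (Ni + Nmi)) / (1 - ρmi / (Nmi + ki)) - 1)) := by
    have hnn : (0:ℝ) ≤ 1/(Ni+kmi) - 1/(Ni+Nmi) := by
      have := one_div_le_one_div_of_le hA hAS
      linarith
    positivity
  constructor
  · rw [hbase, hdecomp]; linarith
  · intro hlt
    rw [hbase, hdecomp]
    have hAS' : Ni + kmi < Ni + Nmi := by linarith
    have hpos : (0:ℝ) < 1/(Ni+kmi) - 1/(Ni+Nmi) := by
      have := one_div_lt_one_div_of_lt hA hAS'
      linarith
    have : (0:ℝ) < (1/ν) * (((1/(Ni+kmi) - 1/(Ni+Nmi)) / (1 - ρi / (Ni + kmi))^2)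
          / ((1 - ρi / (Ni + Nmi)) / (1 - ρi / (Ni + kmi))
              + (1 - ρmi / (Ni + Nmi)) / (1 - ρmi / (Nmi + ki)) - 1)) := by positivity
    linarith

theorem stmt_4 (N1 N2 ρ1 ρ2 ν1 ν2 : ℝ) (hN1 : 0 < N1) (hN2 : 0 < N2)
    (hρ1 : 0 < ρ1) (hρ1' : ρ1 < N1) (hρ2 : 0 < ρ2) (hρ2' : ρ2 < N2)
    (hν1 : 0 < ν1) (hν2 : 0 < ν2) :
    (∀ k1 k2 : ℝ, k1 ∈ Set.Icc 0 N1 → k2 ∈ Set.Icc 0 N2 →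
      D1 N1 N2 ρ1 ρ2 ν1 k1 k2 ≥ D1 N1 N2 ρ1 ρ2 ν1 N1 N2 ∧
      D2 N1 N2 ρ1 ρ2 ν2 k1 k2 ≥ D2 N1 N2 ρ1 ρ2 ν2 N1 N2 ∧
      (k2 < N2 → D1 N1 N2 ρ1 ρ2 ν1 k1 k2 > D1 N1 N2 ρ1 ρ2 ν1 N1 N2) ∧
      (k1 < N1 → D2 N1 N2 ρ1 ρ2 ν2 k1 k2 > D2 N1 N2 ρ1 ρ2 ν2 N1 N2)) ∧
    (∀ k1 k2 : ℝ,
      ParetoOpt N1 N2 (D1 N1 N2 ρ1 ρ2 ν1) (D2 N1 N2 ρ1 ρ2 ν2) k1 k2 ↔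
        k1 = N1 ∧ k2 = N2) := by
  have main : ∀ k1 k2 : ℝ, k1 ∈ Set.Icc 0 N1 → k2 ∈ Set.Icc 0 N2 →
      D1 N1 N2 ρ1 ρ2 ν1 k1 k2 ≥ D1 N1 N2 ρ1 ρ2 ν1 N1 N2 ∧
      D2 N1 N2 ρ1 ρ2 ν2 k1 k2 ≥ D2 N1 N2 ρ1 ρ2 ν2 N1 N2 ∧
      (k2 < N2 → D1 N1 N2 ρ1 ρ2 ν1 k1 k2 > D1 N1 N2 ρ1 ρ2 ν1 N1 N2) ∧
      (k1 < N1 → D2 N1 N2 ρ1 ρ2 ν2 k1 k2 > D2 N1 N2 ρ1 ρ2 ν2 N1 N2) := by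
    intro k1 k2 hk1 hk2
    obtain ⟨hk1l, hk1r⟩ := hk1
    obtain ⟨hk2l, hk2r⟩ := hk2
    have h1 := Dcoc_key N1 N2 ρ1 ρ2 ν1 k1 k2 hN1 hN2 hρ1 hρ1' hρ2 hρ2' hν1
      hk1l hk1r hk2l hk2r
    have h2 := Dcoc_key N2 N1 ρ2 ρ1 ν2 k2 k1 hN2 hN1 hρ2 hρ2' hρ1 hρ1' hν2
      hk2l hk2r hk1l hk1r
    exact ⟨h1.1, h2.1, h1.2, h2.2⟩
  refine ⟨main, fun k1 k2 => ?_⟩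
  have hmem1 : N1 ∈ Set.Icc (0:ℝ) N1 := ⟨hN1.le, le_refl _⟩
  have hmem2 : N2 ∈ Set.Icc (0:ℝ) N2 := ⟨hN2.le, le_refl _⟩
  constructor
  · rintro ⟨hk1, hk2, hno⟩
    have h := main k1 k2 hk1 hk2
    constructor
    · by_contra hne
      have hlt : k1 < N1 := lt_of_le_of_ne hk1.2 hne
      exact hno ⟨N1, N2, hmem1, hmem2, h.1, h.2.1, Or.inr (h.2.2.2 hlt)⟩
    · by_contra hne
      have hlt : k2 < N2 := lt_of_le_of_ne hk2.2 hne
      exact hno ⟨N1, N2, hmem1, hmem2, h.1, h.2.1, Or.inl (h.2.2.1 hlt)⟩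
  · rintro ⟨rfl, rfl⟩
    refine ⟨hmem1, hmem2, ?_⟩
    rintro ⟨l1, l2, hl1, hl2, hf, hg, hs⟩
    have h := main l1 l2 hl1 hl2
    rcases hs with hs | hs
    · exact absurd hs (not_lt.mpr h.1)
    · exact absurd hs (not_lt.mpr h.2.1)
end

section
/- Let λ1, λ2 ∈ (0,1), and Ω1, Ω2 as above. Then for every k1 ∈ [0,1], the expression ((1−k1)/Ω2)·λ1·(1−λ2)·(λ1(λ2−4)+λ2(λ2−2)) + (k1/Ω1)·(λ1λ2+λ2²+2λ1−4)·(λ1+λ2)² is strictly negative. -/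
theorem stmt_9 (lam1 lam2 : ℝ) (h1 : 0 < lam1) (h1' : lam1 < 1) (h2 : 0 < lam2) (h2' : lam2 < 1) :
    let Ω1 := (lam1 + lam2 + lam2 ^ 2) * (1 - lam1) + lam1 * (1 - lam1 * lam2) + 3 * lam2 + lam2 ^ 2
    let Ω2 := (lam1 + lam2 + lam1 ^ 2) * (1 - lam2) + lam2 * (1 - lam1 * lam2) + 3 * lam1 + lam1 ^ 2
    ∀ k1 : ℝ, 0 ≤ k1 → k1 ≤ 1 →
      ((1 - k1) / Ω2) * lam1 * (1 - lam2) * (lam1 * (lam2 - 4) + lam2 * (lam2 - 2))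
        + (k1 / Ω1) * (lam1 * lam2 + lam2 ^ 2 + 2 * lam1 - 4) * (lam1 + lam2) ^ 2 < 0 := by
  intro Ω1 Ω2 k1 hk0 hk1
  have hΩ1 : 0 < Ω1 := by simp only [Ω1]; nlinarith [mul_pos (by nlinarith : (0:ℝ) < lam1 + lam2 + lam2 ^ 2) (by linarith : (0:ℝ) < 1 - lam1), mul_pos h1 (by nlinarith : (0:ℝ) < 1 - lam1 * lam2)]
  have hΩ2 : 0 < Ω2 := by simp only [Ω2]; nlinarith [mul_pos (by nlinarith : (0:ℝ) < lam1 + lam2 + lam1 ^ 2) (by linarith : (0:ℝ) < 1 - lam2), mul_pos h2 (by nlinarith : (0:ℝ) < 1 - lam1 * lam2)]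
  have hA : lam1 * (lam2 - 4) + lam2 * (lam2 - 2) < 0 := by nlinarith
  have hB : lam1 * lam2 + lam2 ^ 2 + 2 * lam1 - 4 < 0 := by nlinarith
  have hS : 0 < (lam1 + lam2) ^ 2 := by positivity
  have hc1 : 0 ≤ (1 - k1) / Ω2 := div_nonneg (by linarith) hΩ2.le
  have hc2 : 0 ≤ k1 / Ω1 := by positivity
  have hP : lam1 * (1 - lam2) > 0 := by nlinarith
  have ht2 : (k1 / Ω1) * (lam1 * lam2 + lam2 ^ 2 + 2 * lam1 - 4) * (lam1 + lam2) ^ 2 ≤ 0 := by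
    have := mul_nonpos_of_nonneg_of_nonpos hc2 (le_of_lt hB)
    nlinarith
  have ht1 : ((1 - k1) / Ω2) * lam1 * (1 - lam2) * (lam1 * (lam2 - 4) + lam2 * (lam2 - 2)) ≤ 0 := by
    have h3 : 0 ≤ (1 - k1) / Ω2 * lam1 * (1 - lam2) := mul_nonneg (mul_nonneg hc1 h1.le) (by linarith)
    exact mul_nonpos_of_nonneg_of_nonpos h3 (le_of_lt hA)
  rcases lt_or_eq_of_le hk1 with hlt | heq
  · have hc1' : 0 < (1 - k1) / Ω2 := div_pos (by linarith) hΩ2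
    have : ((1 - k1) / Ω2) * lam1 * (1 - lam2) * (lam1 * (lam2 - 4) + lam2 * (lam2 - 2)) < 0 := by
      have h3 : 0 < (1 - k1) / Ω2 * lam1 * (1 - lam2) := mul_pos (mul_pos hc1' h1) (by linarith)
      exact mul_neg_of_pos_of_neg h3 hA
    linarith
  · have hc2' : 0 < k1 / Ω1 := by
      subst heq; exact div_pos one_pos hΩ1
    have : (k1 / Ω1) * (lam1 * lam2 + lam2 ^ 2 + 2 * lam1 - 4) * (lam1 + lam2) ^ 2 < 0 := by
      have := mul_neg_of_pos_of_neg hc2' hB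
      exact mul_neg_of_neg_of_pos this hS
    linarith
end

section
/- Let N1, N2 > 0, ρ1 ∈ (0,N1), ρ2 ∈ (0,N2). For k2 ∈ [0,N2] define L1(k2) = ( ρ1/(N1+k2) − ρ1/(N1+N2) ) / (1 − ρ1/(N1+k2))². Then L1 is nonnegative on [0,N2], L1(N2) = 0, and L1 is strictly decreasing in k2 on [0,N2). -/
noncomputable def L1 (N1 N2 ρ1 k2 : ℝ) : ℝ :=
  (ρ1 / (N1 + k2) - ρ1 / (N1 + N2)) / (1 - ρ1 / (N1 + k2)) ^ 2

lemma L1_eq (N1 N2 ρ1 k2 : ℝ) (hS : 0 < N1 + N2) (hx : ρ1 < N1 + k2) (hρ : 0 < ρ1) :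
    L1 N1 N2 ρ1 k2 =
      ρ1 * (N1 + N2 - (N1 + k2)) * (N1 + k2) / ((N1 + N2) * ((N1 + k2) - ρ1) ^ 2) := by
  have hx0 : (0:ℝ) < N1 + k2 := lt_trans hρ hx
  have h1 : (N1 + k2) - ρ1 ≠ 0 := by linarith
  unfold L1
  field_simp

theorem stmt_15 (N1 N2 ρ1 ρ2 : ℝ) (hN1 : 0 < N1) (hN2 : 0 < N2)
    (hρ1 : 0 < ρ1) (hρ1' : ρ1 < N1) (hρ2 : 0 < ρ2) (hρ2' : ρ2 < N2) :
    (∀ k2 : ℝ, k2 ∈ Set.Icc 0 N2 → 0 ≤ L1 N1 N2 ρ1 k2) ∧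
    L1 N1 N2 ρ1 N2 = 0 ∧
    StrictAntiOn (fun k2 => L1 N1 N2 ρ1 k2) (Set.Ico 0 N2) := by
  have hS : (0:ℝ) < N1 + N2 := by linarith
  refine ⟨?_, ?_, ?_⟩
  · intro k2 ⟨hk0, hkN⟩
    have hx : ρ1 < N1 + k2 := by linarith
    rw [L1_eq N1 N2 ρ1 k2 hS hx hρ1]
    apply div_nonneg
    · have : (0:ℝ) ≤ N1 + N2 - (N1 + k2) := by linarith
      positivity
    · positivity
  · rw [L1_eq N1 N2 ρ1 N2 hS (by linarith) hρ1]
    simp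
  · intro a ⟨ha0, haN⟩ b ⟨hb0, hbN⟩ hab
    simp only
    have hxa : ρ1 < N1 + a := by linarith
    have hxb : ρ1 < N1 + b := by linarith
    rw [L1_eq N1 N2 ρ1 a hS hxa hρ1, L1_eq N1 N2 ρ1 b hS hxb hρ1]
    rw [div_lt_div_iff₀ (mul_pos hS (pow_pos (by linarith) 2)) (mul_pos hS (pow_pos (by linarith) 2))]
    nlinarith [mul_pos (mul_pos (show (0:ℝ) < N1 + b by linarith)
        (show (0:ℝ) < N1 + a - ρ1 by linarith)) (show (0:ℝ) < N1 + N2 - ρ1 by linarith),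
      mul_pos (mul_pos hρ1 (show (0:ℝ) < N1 + b - ρ1 by linarith))
        (show (0:ℝ) < N1 + N2 - (N1 + a) by linarith),
      mul_pos hρ1 hS, sq_nonneg (a - b),
      mul_pos (mul_pos (mul_pos hρ1 hS) (show (0:ℝ) < b - a by linarith))
        (mul_pos (mul_pos (show (0:ℝ) < N1 + b by linarith)
          (show (0:ℝ) < N1 + a - ρ1 by linarith)) (show (0:ℝ) < N1 + N2 - ρ1 by linarith)),
      mul_pos (mul_pos (mul_pos hρ1 hS) (show (0:ℝ) < b - a by linarith))
        (mul_pos (mul_pos hρ1 (show (0:ℝ) < N1 + b - ρ1 by linarith))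
          (show (0:ℝ) < N1 + N2 - (N1 + a) by linarith))]
end
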